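/- arXiv:2004.00839 — 3 statements merged into one kernel-verified Lean document; each statement's English description precedes it below -/
import Mathlib

section
/- Let f : 2^V → ℝ≥0 be monotone and submodular with f(∅) = 0, and let A_0 = ∅, A_i = A_{i-1} ∪ {e_i} where e_i maximizes the marginal gain f(A_{i-1} ∪ {e}) - f(A_{i-1}) over e ∈ V \ A_{i-1}. Then for any set S with |S| ≤ k, after k greedy steps, f(A_k) ≥ (1 - (1 - 1/k)^k) · f(S) ≥ (1 - 1/e) · f(S). -/
/-- Greedy `(1 - 1/e)`-approximation guarantee for monotone submodular maximization. -/
theorem greedy_approximation {V : Type*} [DecidableEq V] [Fintype V]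
    (f : Finset V → ℝ)
    (hmono : ∀ A B : Finset V, A ⊆ B → f A ≤ f B)
    (hsub : ∀ A B : Finset V, A ⊆ B → ∀ a ∉ B,
        f (insert a A) - f A ≥ f (insert a B) - f B)
    (hzero : f ∅ = 0)
    (hnonneg : ∀ A : Finset V, 0 ≤ f A)
    (k : ℕ) (hk : 0 < k)
    (A : ℕ → Finset V) (hA0 : A 0 = ∅)
    (hgreedy : ∀ i < k, ∃ e ∉ A i, A (i + 1) = insert e (A i) ∧
        ∀ e' ∉ A i, f (insert e' (A i)) - f (A i) ≤ f (insert e (A i)) - f (A i)) :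
    ∀ S : Finset V, S.card ≤ k →
      f (A k) ≥ (1 - (1 - 1 / (k : ℝ)) ^ k) * f S ∧
      (1 - (1 - 1 / (k : ℝ)) ^ k) * f S ≥ (1 - 1 / Real.exp 1) * f S := by
  intro S hS
  have hkpos : (0:ℝ) < k := by exact_mod_cast hk
  have h1k : (0:ℝ) ≤ 1 - 1/k := by
    have h : 1/(k:ℝ) ≤ 1 := by
      rw [div_le_one hkpos]; exact_mod_cast hk
    linarith
  -- submodular sum bound
  have hsum : ∀ (T B : Finset V), f (B ∪ T) - f B ≤ ∑ e ∈ T, (f (insert e B) - f B) := by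
    intro T B
    induction T using Finset.induction_on with
    | empty => simp
    | @insert a s ha ih =>
      rw [Finset.sum_insert ha, Finset.union_insert]
      by_cases haBs : a ∈ B ∪ s
      · have haB : a ∈ B := (Finset.mem_union.mp haBs).resolve_right ha
        rw [Finset.insert_eq_self.mpr haBs, Finset.insert_eq_self.mpr haB]
        linarith
      · have h := hsub B (B ∪ s) Finset.subset_union_left a haBs
        linarith
  -- main induction
  have key : ∀ i ≤ k, f S - f (A i) ≤ (1 - 1/(k:ℝ))^i * f S := by
    intro i
    induction i with
    | zero => intro _; simp [hA0, hzero]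
    | succ i ih =>
      intro hik
      have hiklt : i < k := Nat.lt_of_succ_le hik
      have hδ := ih (le_of_lt hiklt)
      obtain ⟨e, he, hA1, hmax⟩ := hgreedy i hiklt
      have hg0 : 0 ≤ f (A (i+1)) - f (A i) := by
        rw [hA1]
        have := hmono (A i) (insert e (A i)) (Finset.subset_insert _ _)
        linarith
      have hgS : f S - f (A i) ≤ k * (f (A (i+1)) - f (A i)) := by
        have h1 : f S ≤ f (A i ∪ S) := hmono _ _ Finset.subset_union_right
        have h2 : f (A i ∪ S) - f (A i)
            ≤ ∑ e' ∈ S \ A i, (f (insert e' (A i)) - f (A i)) := by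
          have h := hsum (S \ A i) (A i)
          rwa [Finset.union_sdiff_self_eq_union] at h
        have h3 : ∑ e' ∈ S \ A i, (f (insert e' (A i)) - f (A i))
            ≤ (S \ A i).card • (f (A (i+1)) - f (A i)) := by
          apply Finset.sum_le_card_nsmul
          intro x hx
          rw [hA1]
          exact hmax x (Finset.mem_sdiff.mp hx).2
        rw [nsmul_eq_mul] at h3
        have h4 : ((S \ A i).card : ℝ) ≤ k := by
          have hc : (S \ A i).card ≤ k :=
            le_trans (Finset.card_le_card (Finset.sdiff_subset)) hS
          exact_mod_cast hc
        have h5 : ((S \ A i).card : ℝ) * (f (A (i+1)) - f (A i))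
            ≤ k * (f (A (i+1)) - f (A i)) := mul_le_mul_of_nonneg_right h4 hg0
        linarith
      have step : f S - f (A (i+1)) ≤ (1 - 1/(k:ℝ)) * (f S - f (A i)) := by
        have hdiv : (f S - f (A i))/k ≤ f (A (i+1)) - f (A i) := by
          rw [div_le_iff₀ hkpos]; linarith
        have expand : (1 - 1/(k:ℝ)) * (f S - f (A i))
            = (f S - f (A i)) - (f S - f (A i))/k := by
          field_simp
        linarith
      calc f S - f (A (i+1)) ≤ (1 - 1/(k:ℝ)) * (f S - f (A i)) := step
        _ ≤ (1 - 1/(k:ℝ)) * ((1 - 1/(k:ℝ))^i * f S) :=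
            mul_le_mul_of_nonneg_left hδ h1k
        _ = (1 - 1/(k:ℝ))^(i+1) * f S := by ring
  have hkey := key k le_rfl
  constructor
  · linarith
  · have hexp : (1 - 1/(k:ℝ))^k ≤ 1 / Real.exp 1 := by
      have h1 : 1 - 1/(k:ℝ) ≤ Real.exp (-(1/k)) := by
        have := Real.add_one_le_exp (-(1/(k:ℝ)))
        linarith
      have h2 : (1 - 1/(k:ℝ))^k ≤ (Real.exp (-(1/k)))^k := pow_le_pow_left₀ h1k h1 k
      have h3 : (Real.exp (-(1/(k:ℝ))))^k = Real.exp (-1) := by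
        rw [← Real.exp_nat_mul]
        congr 1
        field_simp
      rw [h3, Real.exp_neg] at h2
      simpa [one_div] using h2
    have hfS : 0 ≤ f S := hnonneg S
    have := mul_le_mul_of_nonneg_right hexp hfS
    nlinarith
end

section
/- Every finite exact potential game possesses at least one pure Nash equilibrium. -/
/-- Every finite exact potential game possesses a pure Nash equilibrium. -/
theorem finite_potential_game_has_nash
    {J : Type*} [DecidableEq J] [Fintype J] {A : J → Type*}
    [∀ j, Fintype (A j)] [∀ j, Nonempty (A j)]
    (F : (∀ j, A j) → ℝ) (U : ∀ j : J, (∀ i, A i) → ℝ)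
    (hpot : ∀ (j : J) (a : ∀ i, A i) (aj : A j),
        F (Function.update a j aj) - F a = U j (Function.update a j aj) - U j a) :
    ∃ a : ∀ j, A j, ∀ (j : J) (aj' : A j),
      U j (Function.update a j aj') ≤ U j a := by
  obtain ⟨a, ha⟩ := Finite.exists_max F
  refine ⟨a, fun j aj' => ?_⟩
  have h1 := hpot j a aj'
  have h2 := ha (Function.update a j aj')
  linarith
end

section
/- In a finite exact potential game, any better-reply improvement path (a sequence of action profiles where at each step one player strictly improves their utility by a unilateral deviation) is finite, i.e., the game has the finite improvement property. -/
/-- Finite improvement property: a finite exact potential game admits no infinite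
better-reply improvement path. -/
theorem finite_improvement_property
    {J : Type*} [DecidableEq J] [Fintype J] {A : J → Type*} [∀ j, Fintype (A j)]
    (F : (∀ j, A j) → ℝ) (U : ∀ j : J, (∀ i, A i) → ℝ)
    (hpot : ∀ (j : J) (a : ∀ i, A i) (aj : A j),
        F (Function.update a j aj) - F a = U j (Function.update a j aj) - U j a) :
    ¬ ∃ a : ℕ → (∀ j, A j), ∀ t : ℕ, ∃ j : J,
        a (t + 1) = Function.update (a t) j (a (t + 1) j) ∧
        U j (a t) < U j (a (t + 1)) := by
  rintro ⟨a, ha⟩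
  have hF : StrictMono (fun t => F (a t)) := by
    apply strictMono_nat_of_lt_succ
    intro t
    obtain ⟨j, heq, hlt⟩ := ha t
    have := hpot j (a t) (a (t + 1) j)
    rw [← heq] at this
    linarith
  have hinj : Function.Injective a := fun s t hst => by
    by_contra hne
    rcases lt_or_gt_of_ne hne with h | h
    · exact absurd (congrArg F hst) (ne_of_lt (hF h))
    · exact absurd (congrArg F hst) (ne_of_gt (hF h))
  exact not_injective_infinite_finite a hinj
end
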